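/- Let $G$ be a graph on $n$ vertices with $m$ edges and first Zagreb index $Z_1$, and let $0 \le \alpha < 1$. Then $E_{A_\alpha}(G) \ge \sqrt{2\alpha^2 Z_1 + 4(1-\alpha)^2 m - \frac{8\alpha^2 m^2}{n}}$. -/

import Mathlib

/-! Put `x i = ρ i - 2αm/n`. Since `tr A_α = 2αm`, the `x i` sum to zero, and from
`tr A_α² = α² Z₁ + 2(1-α)² m` one gets `∑ x i ² = α² Z₁ + 2(1-α)² m - 4α²m²/n`. For reals summing
to zero, each `|x i|` is at most half of `S = ∑ |x j|`, so `∑ x i ² ≤ S · S/2`, i.e.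
`S ≥ √(2 ∑ x i ²)`, which is the bound. -/

open Finset

theorem Matrix.IsHermitian.trace_pow_eq_sum_eigenvalues_pow {𝕜 n : Type*} [RCLike 𝕜]
    [Fintype n] [DecidableEq n] {A : Matrix n n 𝕜} (hA : A.IsHermitian) (k : ℕ) :
    (A ^ k).trace = ∑ i, (hA.eigenvalues i : 𝕜) ^ k := by
  conv_lhs => rw [hA.spectral_theorem, ← map_pow, Unitary.conjStarAlgAut_apply,
    Matrix.trace_mul_cycle, Unitary.coe_star_mul_self, Matrix.one_mul, Matrix.diagonal_pow,
    Matrix.trace_diagonal]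
  rfl

namespace Finset

variable {ι : Type*}

theorem two_mul_abs_le_sum_abs_of_sum_eq_zero [DecidableEq ι] {s : Finset ι} {x : ι → ℝ}
    (hx : ∑ j ∈ s, x j = 0) {i : ι} (hi : i ∈ s) : 2 * |x i| ≤ ∑ j ∈ s, |x j| := by
  rw [← add_sum_erase s _ hi] at hx ⊢
  have : |x i| ≤ ∑ j ∈ s.erase i, |x j| := by
    rw [eq_neg_of_add_eq_zero_left hx, abs_neg]
    exact abs_sum_le_sum_abs _ _
  linarith

theorem two_mul_sum_sq_le_sq_sum_abs_of_sum_eq_zero {s : Finset ι}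
    {x : ι → ℝ} (hx : ∑ j ∈ s, x j = 0) : 2 * ∑ i ∈ s, x i ^ 2 ≤ (∑ i ∈ s, |x i|) ^ 2 := by
  calc 2 * ∑ i ∈ s, x i ^ 2 = ∑ i ∈ s, |x i| * (2 * |x i|) := by
        rw [mul_sum]; congr! 1 with i; rw [← sq_abs]; ring
    _ ≤ ∑ i ∈ s, |x i| * ∑ j ∈ s, |x j| := by
        gcongr with i hi
        classical exact two_mul_abs_le_sum_abs_of_sum_eq_zero hx hi
    _ = (∑ i ∈ s, |x i|) ^ 2 := by rw [← sum_mul, sq]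

theorem sum_sub_sum_div_card (s : Finset ι) (x : ι → ℝ) :
    ∑ i ∈ s, (x i - (∑ j ∈ s, x j) / #s) = 0 := by
  rcases s.eq_empty_or_nonempty with rfl | hs
  · simp
  · rw [sum_sub_distrib, sum_const, nsmul_eq_mul, mul_div_cancel₀ _ (by positivity), sub_self]

theorem sum_sq_sub_sum_div_card (s : Finset ι) (x : ι → ℝ) :
    ∑ i ∈ s, (x i - (∑ j ∈ s, x j) / #s) ^ 2 = ∑ i ∈ s, x i ^ 2 - (∑ i ∈ s, x i) ^ 2 / #s := by
  rcases s.eq_empty_or_nonempty with rfl | hs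
  · simp
  · have : (#s : ℝ) ≠ 0 := by positivity
    simp only [sub_sq, sum_add_distrib, sum_sub_distrib, ← sum_mul, ← mul_sum, sum_const,
      nsmul_eq_mul]
    field_simp
    ring

theorem two_mul_sum_sq_sub_sq_sum_div_card_le (s : Finset ι) (x : ι → ℝ) :
    2 * (∑ i ∈ s, x i ^ 2 - (∑ i ∈ s, x i) ^ 2 / #s)
      ≤ (∑ i ∈ s, |x i - (∑ j ∈ s, x j) / #s|) ^ 2 := by
  rw [← sum_sq_sub_sum_div_card]
  exact two_mul_sum_sq_le_sq_sum_abs_of_sum_eq_zero (sum_sub_sum_div_card s x)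

end Finset

namespace SimpleGraph

variable {V R : Type*} [Fintype V] (G : SimpleGraph V) [DecidableRel G.Adj] [CommRing R]

theorem trace_adjMatrix_mul_self : (G.adjMatrix R * G.adjMatrix R).trace = 2 * #G.edgeFinset := by
  simp only [Matrix.trace, Matrix.diag_apply, adjMatrix_mul_self_apply_self]
  rw [← Nat.cast_sum, sum_degrees_eq_twice_card_edges, Nat.cast_mul, Nat.cast_two]

variable [DecidableEq V]

def aAlphaMatrix (α : R) : Matrix V V R := α • G.degMatrix R + (1 - α) • G.adjMatrix R

theorem trace_degMatrix : (G.degMatrix R).trace = 2 * #G.edgeFinset := by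
  rw [degMatrix, Matrix.trace_diagonal, ← Nat.cast_sum, sum_degrees_eq_twice_card_edges,
    Nat.cast_mul, Nat.cast_two]

theorem trace_degMatrix_mul_self :
    (G.degMatrix R * G.degMatrix R).trace = ∑ v, (G.degree v : R) ^ 2 := by
  simp [degMatrix, Matrix.diagonal_mul_diagonal, sq]

theorem trace_degMatrix_mul_adjMatrix : (G.degMatrix R * G.adjMatrix R).trace = 0 := by
  simp [Matrix.trace, degMatrix, Matrix.diagonal_mul, -mul_adjMatrix_apply]

theorem trace_aAlphaMatrix (α : R) : (G.aAlphaMatrix α).trace = 2 * α * #G.edgeFinset := by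
  simp only [aAlphaMatrix, Matrix.trace_add, Matrix.trace_smul, trace_degMatrix, trace_adjMatrix,
    smul_eq_mul]
  ring

theorem trace_aAlphaMatrix_sq (α : R) :
    (G.aAlphaMatrix α ^ 2).trace
      = α ^ 2 * ∑ v, (G.degree v : R) ^ 2 + 2 * (1 - α) ^ 2 * #G.edgeFinset := by
  simp only [aAlphaMatrix, sq, add_mul, mul_add, Matrix.smul_mul, Matrix.mul_smul,
    Matrix.trace_add, Matrix.trace_smul, Matrix.trace_mul_comm (G.adjMatrix R),
    trace_degMatrix_mul_self, trace_degMatrix_mul_adjMatrix, trace_adjMatrix_mul_self,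
    smul_eq_mul]
  ring

end SimpleGraph

theorem energy_Aalpha_sqrt_lower_bound_general {V : Type*} [Fintype V] [DecidableEq V]
    (G : SimpleGraph V) [DecidableRel G.Adj]
    (α : ℝ)
    (hH : (α • Matrix.diagonal (fun v => (G.degree v : ℝ))
        + (1 - α) • G.adjMatrix ℝ).IsHermitian) :
    Real.sqrt (2 * α ^ 2 * (∑ v, (G.degree v : ℝ) ^ 2)
        + 4 * (1 - α) ^ 2 * (G.edgeFinset.card : ℝ)
        - 8 * α ^ 2 * (G.edgeFinset.card : ℝ) ^ 2 / (Fintype.card V : ℝ))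
      ≤ ∑ i, |hH.eigenvalues i
          - 2 * α * (G.edgeFinset.card : ℝ) / (Fintype.card V : ℝ)| := by
  -- `hH` is a hypothesis about `G.aAlphaMatrix α`, unfolded.
  have hsum : ∑ i, hH.eigenvalues i = 2 * α * #G.edgeFinset := by
    simpa using hH.trace_eq_sum_eigenvalues.symm.trans (G.trace_aAlphaMatrix α)
  have hsum_sq : ∑ i, hH.eigenvalues i ^ 2
      = α ^ 2 * ∑ v, (G.degree v : ℝ) ^ 2 + 2 * (1 - α) ^ 2 * #G.edgeFinset := by
    simpa using (hH.trace_pow_eq_sum_eigenvalues_pow 2).symm.trans (G.trace_aAlphaMatrix_sq α)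
  have hdev := two_mul_sum_sq_sub_sq_sum_div_card_le univ hH.eigenvalues
  rw [hsum, hsum_sq, card_univ] at hdev
  rw [Real.sqrt_le_iff]
  exact ⟨by positivity, by convert hdev using 1; ring⟩

/-- For a graph `G` on `n` vertices with `m` edges and first Zagreb index `Z₁`,
and `0 ≤ α < 1`, the `A_α`-energy satisfies
`E_{A_α}(G) ≥ √(2 α² Z₁ + 4 (1-α)² m - 8 α² m² / n)`. -/
theorem energy_Aalpha_sqrt_lower_bound {V : Type*} [Fintype V] [DecidableEq V]
    [Nonempty V] (G : SimpleGraph V) [DecidableRel G.Adj]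
    (α : ℝ) (hα0 : 0 ≤ α) (hα1 : α < 1)
    (hH : (α • Matrix.diagonal (fun v => (G.degree v : ℝ))
        + (1 - α) • G.adjMatrix ℝ).IsHermitian) :
    Real.sqrt (2 * α ^ 2 * (∑ v, (G.degree v : ℝ) ^ 2)
        + 4 * (1 - α) ^ 2 * (G.edgeFinset.card : ℝ)
        - 8 * α ^ 2 * (G.edgeFinset.card : ℝ) ^ 2 / (Fintype.card V : ℝ))
      ≤ ∑ i, |hH.eigenvalues i
          - 2 * α * (G.edgeFinset.card : ℝ) / (Fintype.card V : ℝ)| :=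
  energy_Aalpha_sqrt_lower_bound_general G α hH
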